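/- (Lemma 2, part (prop_6.2).) Fix ε_ν ∈ (0,1), and suppose the segmentation used for estimation equals the true segmentation R°, with every region of R° nonempty and Assumptions 1 and 2 in force. For each n and each admissible pair (ν_d, ν_u), let μ̂_n(ν_d, ν_u) ∈ Θ(R°) be a maximizer of μ ↦ Σ_{t=⌊n·ν_d⌋+1}^{⌊n·ν_u⌋} l((R°,μ); X_t) over Θ(R°). Then almost surely, sup over all admissible pairs (ν_d, ν_u) of ‖μ̂_n(ν_d,ν_u) − μ°‖ → 0 as n → ∞. -/

import Mathlib

open MeasureTheory ProbabilityTheory Filter Topology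

/-- The reduced Poisson log-likelihood of a count array `x` under segmentation `R`
and rates `μ`: `l((R,μ); x) = Σ_w Σ_i (x(i,w)·log μ(R i, w) − μ(R i, w))`. -/
noncomputable def loglik {NI NW m : ℕ} (R : Fin NI → Fin m)
    (μ : Fin m × Fin NW → ℝ) (x : Fin NI × Fin NW → ℕ) : ℝ :=
  ∑ w : Fin NW, ∑ i : Fin NI, ((x (i, w) : ℝ) * Real.log (μ (R i, w)) - μ (R i, w))

/-- Gradient of `l((R,μ); x)` in `μ`: its `(h,w)` entry is
`Σ_{i : R i = h} (x(i,w)/μ(h,w) − 1)`. -/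
noncomputable def loglikGrad {NI NW m : ℕ} (R : Fin NI → Fin m)
    (μ : Fin m × Fin NW → ℝ) (x : Fin NI × Fin NW → ℕ) :
    Fin m × Fin NW → ℝ :=
  fun hw => ∑ i : Fin NI,
    if R i = hw.1 then ((x (i, hw.2) : ℝ) / μ hw - 1) else 0

/-- Diagonal of the Hessian of `l((R,μ); x)` in `μ`: its `(h,w)` entry is
`−Σ_{i : R i = h} x(i,w)/μ(h,w)²`. -/
noncomputable def loglikHess {NI NW m : ℕ} (R : Fin NI → Fin m)
    (μ : Fin m × Fin NW → ℝ) (x : Fin NI × Fin NW → ℕ) :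
    Fin m × Fin NW → ℝ :=
  fun hw => -∑ i : Fin NI,
    if R i = hw.1 then (x (i, hw.2) : ℝ) / (μ hw) ^ 2 else 0

/-- The expected log-likelihood `L(R,μ)` when the true per-pixel rates are
`λ°(i,w) = μ°(R° i, w)`. -/
noncomputable def expLoglik {NI NW m0 m : ℕ} (R0 : Fin NI → Fin m0)
    (μ0 : Fin m0 × Fin NW → ℝ) (R : Fin NI → Fin m) (μ : Fin m × Fin NW → ℝ) : ℝ :=
  ∑ w : Fin NW, ∑ i : Fin NI, (μ0 (R0 i, w) * Real.log (μ (R i, w)) - μ (R i, w))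

/-- Gradient of `L(R,μ)` in `μ`. -/
noncomputable def expLoglikGrad {NI NW m0 m : ℕ} (R0 : Fin NI → Fin m0)
    (μ0 : Fin m0 × Fin NW → ℝ) (R : Fin NI → Fin m) (μ : Fin m × Fin NW → ℝ) :
    Fin m × Fin NW → ℝ :=
  fun hw => ∑ i : Fin NI,
    if R i = hw.1 then (μ0 (R0 i, hw.2) / μ hw - 1) else 0

/-- Diagonal of the Hessian of `L(R,μ)` in `μ`. -/
noncomputable def expLoglikHess {NI NW m0 m : ℕ} (R0 : Fin NI → Fin m0)
    (μ0 : Fin m0 × Fin NW → ℝ) (R : Fin NI → Fin m) (μ : Fin m × Fin NW → ℝ) :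
    Fin m × Fin NW → ℝ :=
  fun hw => -∑ i : Fin NI,
    if R i = hw.1 then μ0 (R0 i, hw.2) / (μ hw) ^ 2 else 0

/-- The compact parameter box `Θ(R) = [C_d, C_u]^(Fin m × Fin N_W)`. -/
def Theta (Cd Cu : ℝ) (m NW : ℕ) : Set (Fin m × Fin NW → ℝ) :=
  {μ | ∀ p, μ p ∈ Set.Icc Cd Cu}

/-- An admissible pair of normalized endpoints: `0 ≤ ν_d < ν_u ≤ 1` with
`ν_u − ν_d > ε_ν`. -/
def AdmPair (epsnu : ℝ) : Type :=
  {q : ℝ × ℝ // 0 ≤ q.1 ∧ q.1 < q.2 ∧ q.2 ≤ 1 ∧ epsnu < q.2 - q.1}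

/-- Regions `p` and `q` of the segmentation `R` are neighbouring: some graph edge
joins a pixel of `R⁻¹(p)` to a pixel of `R⁻¹(q)`. -/
def Neighbouring {NI m : ℕ} (G : SimpleGraph (Fin NI)) (R : Fin NI → Fin m)
    (p q : Fin m) : Prop :=
  ∃ i j, G.Adj i j ∧ R i = p ∧ R j = q

/-!
The partial-sum log-likelihood separates over the coordinates `(h, w)` of `μ`: the `(h, w)` term
is `S log c - K c`, where `S` is the total count in band `w` over region `h` and the window, and
`K` is the number of (pixel, time) pairs contributing to it. On the box the maximizer is therefore
`S / K` clipped to `[C_d, C_u]`; clipping is 1-Lipschitz and fixes `μ°`, so it suffices that all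
window averages `S / K` converge to `μ°` uniformly over admissible windows. The window
`(⌊n ν_d⌋, ⌊n ν_u⌋]` has length at least `n ε_ν / 2`, and by the strong law of large numbers the
partial sums of each pixel satisfy `S_k = k λ° + o(n)` uniformly in `k ≤ n`.
-/

open Finset
open scoped NNReal Nat

lemma hasSum_poisson_weight_mul_self (r : ℝ≥0) :
    HasSum (fun n : ℕ => Real.exp (-r) * r ^ n / n ! * n) r := by
  rw [← hasSum_nat_add_iff' 1]
  simp only [sum_range_one, CharP.cast_eq_zero, mul_zero, sub_zero]
  have h := (hasSum_one_poissonMeasure r).mul_left (r : ℝ)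
  rw [mul_one] at h
  refine h.congr_fun fun n => ?_
  rw [Nat.factorial_succ, pow_succ]
  push_cast
  field_simp

lemma integrable_natCast_poissonMeasure (r : ℝ≥0) :
    Integrable (fun n : ℕ => (n : ℝ)) (poissonMeasure r) :=
  integrable_poissonMeasure_iff.2 <| by simpa using (hasSum_poisson_weight_mul_self r).summable

lemma integral_natCast_poissonMeasure (r : ℝ≥0) :
    ∫ n : ℕ, (n : ℝ) ∂poissonMeasure r = r :=
  (hasSum_integral_poissonMeasure (integrable_natCast_poissonMeasure r)).unique <| by
    simpa using hasSum_poisson_weight_mul_self r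

lemma ae_tendsto_average_of_map_eq_poissonMeasure {Ω : Type*} [MeasurableSpace Ω]
    {P : Measure Ω} {r : ℝ≥0} (Y : ℕ → Ω → ℕ) (hY : ∀ t, Measurable (Y t))
    (hindep : Pairwise fun s t => IndepFun (Y s) (Y t) P)
    (hlaw : ∀ t, P.map (Y t) = poissonMeasure r) :
    ∀ᵐ ω ∂P, Tendsto (fun n : ℕ => (∑ t ∈ range n, (Y t ω : ℝ)) / n) atTop (𝓝 r) := by
  have hident : ∀ t, IdentDistrib (fun ω => (Y t ω : ℝ)) (fun ω => (Y 0 ω : ℝ)) P P := fun t =>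
    (⟨(hY t).aemeasurable, (hY 0).aemeasurable, by rw [hlaw, hlaw]⟩ :
      IdentDistrib (Y t) (Y 0) P P).comp measurable_from_top
  have hint : Integrable (fun ω => (Y 0 ω : ℝ)) P :=
    (integrable_map_measure measurable_from_top.aestronglyMeasurable (hY 0).aemeasurable).1
      (hlaw 0 ▸ integrable_natCast_poissonMeasure r)
  have hmean : ∫ ω, (Y 0 ω : ℝ) ∂P = r := by
    rw [← integral_map (hY 0).aemeasurable measurable_from_top.aestronglyMeasurable, hlaw 0,
      integral_natCast_poissonMeasure]
  simpa [hmean] using strong_law_ae_real (fun t ω => (Y t ω : ℝ)) hint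
    (fun s t hst => (hindep hst).comp measurable_from_top measurable_from_top) hident

lemma eventually_forall_le_abs_sub_le_of_tendsto_div {S : ℕ → ℝ} {L : ℝ}
    (hS : Tendsto (fun n : ℕ => S n / n) atTop (𝓝 L)) {δ : ℝ} (hδ : 0 < δ) :
    ∀ᶠ n : ℕ in atTop, ∀ k ≤ n, |S k - k * L| ≤ δ * n := by
  obtain ⟨N, hN⟩ := Metric.tendsto_atTop.1 hS δ hδ
  set C := ∑ k ∈ range (N + 1), |S k - k * L|
  have hC : ∀ᶠ n : ℕ in atTop, C ≤ δ * n :=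
    (tendsto_natCast_atTop_atTop.const_mul_atTop hδ).eventually_ge_atTop C
  filter_upwards [hC] with n hn k hk
  rcases le_or_gt k N with hkN | hkN
  · exact (single_le_sum (fun i _ => abs_nonneg (S i - i * L))
      (mem_range.2 (Nat.lt_succ_of_le hkN))).trans hn
  · have hk0 : (0 : ℝ) < k := by exact_mod_cast (show 0 < k by omega)
    calc |S k - k * L| = k * dist (S k / k) L := by
          rw [Real.dist_eq, ← abs_of_pos hk0, ← abs_mul, abs_of_pos hk0, mul_sub,
            mul_div_cancel₀ _ hk0.ne']
      _ ≤ k * δ := by gcongr; exact (hN k hkN.le).le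
      _ ≤ δ * n := by rw [mul_comm]; gcongr

lemma eventually_abs_window_average_sub_le {S : ℕ → ℝ} {L : ℝ}
    (hS : Tendsto (fun n : ℕ => S n / n) atTop (𝓝 L)) {ε η : ℝ} (hε : 0 < ε) (hη : 0 < η) :
    ∀ᶠ n : ℕ in atTop, ∀ a b : ℕ, b ≤ n → η * n ≤ (b : ℝ) - a →
      |(S b - S a) / ((b : ℝ) - a) - L| ≤ ε := by
  filter_upwards [eventually_forall_le_abs_sub_le_of_tendsto_div hS (half_pos (mul_pos hε hη)),
    eventually_gt_atTop 0] with n hdev hn a b hb hab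
  have hlen : 0 < (b : ℝ) - a := lt_of_lt_of_le (by positivity) hab
  have ha : a ≤ n := by
    have : (a : ℝ) < b := by linarith
    exact (Nat.cast_lt.1 this).le.trans hb
  rw [div_sub' hlen.ne', abs_div, abs_of_pos hlen, div_le_iff₀ hlen]
  calc |S b - S a - ((b : ℝ) - a) * L| = |(S b - b * L) - (S a - a * L)| := by ring_nf
    _ ≤ ε * η / 2 * n + ε * η / 2 * n :=
        (abs_sub _ _).trans (add_le_add (hdev b hb) (hdev a ha))
    _ = ε * (η * n) := by ring
    _ ≤ ε * ((b : ℝ) - a) := by gcongr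

lemma eq_max_min_of_isMaxOn {S K a b m : ℝ} (hS : 0 ≤ S) (hK : 0 < K) (ha : 0 < a)
    (hm : m ∈ Set.Icc a b) (hmax : IsMaxOn (fun c => S * Real.log c - K * c) (Set.Icc a b) m) :
    m = max a (min b (S / K)) := by
  set c := max a (min b (S / K))
  have hab : a ≤ b := hm.1.trans hm.2
  have hc : c ∈ Set.Icc a b := ⟨le_max_left _ _, max_le hab (min_le_left _ _)⟩
  have hc0 : 0 < c := ha.trans_le hc.1
  have hm0 : 0 < m := ha.trans_le hm.1
  -- first-order condition at the projection `c` of the free maximizer `S / K` onto `[a, b]`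
  have hsign : (S - K * c) * (m - c) ≤ 0 := by
    rcases le_total (S / K) a with h | h
    · have : c = a := max_eq_left ((min_le_right _ _).trans h)
      rw [this]
      rw [div_le_iff₀ hK, mul_comm] at h
      exact mul_nonpos_of_nonpos_of_nonneg (by linarith) (by linarith [hm.1])
    rcases le_total (S / K) b with h' | h'
    · have : c = S / K := by simp only [c, min_eq_right h', max_eq_right h]
      rw [this, mul_div_cancel₀ S hK.ne', sub_self, zero_mul]
    · have : c = b := by simp only [c, min_eq_left h', max_eq_right hab]
      rw [this]
      rw [le_div_iff₀ hK, mul_comm] at h'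
      exact mul_nonpos_of_nonneg_of_nonpos (by linarith) (by linarith [hm.2])
  by_contra hne
  have hmc : m - c ≠ 0 := sub_ne_zero.2 hne
  -- `log x ≤ x - 1`, strict unless `x = 1`, applied to `x = m / c`
  have hgap : S * (m / c - 1) - K * (m - c) = (S - K * c) * (m - c) / c := by field_simp
  have hdrop : S * Real.log (m / c) - K * (m - c) < 0 := by
    rcases eq_or_ne (S - K * c) 0 with h0 | h0
    · have hSpos : 0 < S := by nlinarith
      have hlog := Real.log_lt_sub_one_of_pos (div_pos hm0 hc0)
        fun h => hne ((div_eq_one_iff_eq hc0.ne').1 h)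
      rw [h0, zero_mul, zero_div] at hgap
      linarith [mul_lt_mul_of_pos_left hlog hSpos]
    · have hneg : (S - K * c) * (m - c) < 0 := lt_of_le_of_ne hsign (mul_ne_zero h0 hmc)
      have hlog := mul_le_mul_of_nonneg_left (Real.log_le_sub_one_of_pos (div_pos hm0 hc0)) hS
      have : (S - K * c) * (m - c) / c < 0 := div_neg_of_neg_of_pos hneg hc0
      linarith
  have hle : S * Real.log c - K * c ≤ S * Real.log m - K * m := hmax hc
  rw [Real.log_div hm0.ne' hc0.ne'] at hdrop
  linarith

lemma abs_average_sub_le {ι : Type*} {u : Finset ι} (hu : u.Nonempty) {f : ι → ℝ} {L ε : ℝ}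
    (h : ∀ i ∈ u, |f i - L| ≤ ε) : |(∑ i ∈ u, f i) / #u - L| ≤ ε := by
  have hcard : (0 : ℝ) < #u := by exact_mod_cast hu.card_pos
  rw [div_sub' hcard.ne', abs_div, abs_of_pos hcard, div_le_iff₀ hcard]
  calc |∑ i ∈ u, f i - #u * L| = |∑ i ∈ u, (f i - L)| := by
        rw [sum_sub_distrib, sum_const, nsmul_eq_mul]
    _ ≤ ∑ i ∈ u, |f i - L| := abs_sum_le_sum_abs _ _
    _ ≤ ∑ _i ∈ u, ε := sum_le_sum h
    _ = ε * #u := by rw [sum_const, nsmul_eq_mul, mul_comm]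

lemma le_of_sum_update_le {ι : Type*} [Fintype ι] [DecidableEq ι] (g : ι → ℝ → ℝ)
    (ν : ι → ℝ) (p : ι) (c : ℝ)
    (h : ∑ j, g j (Function.update ν p c j) ≤ ∑ j, g j (ν j)) : g p c ≤ g p (ν p) := by
  simp only [Function.apply_update g, sum_update_of_mem (mem_univ p)] at h
  rw [← add_sum_erase _ _ (mem_univ p), ← sdiff_singleton_eq_erase] at h
  linarith

lemma loglik_eq_sum_regions {NI NW m : ℕ} (R : Fin NI → Fin m) (μ : Fin m × Fin NW → ℝ)
    (x : Fin NI × Fin NW → ℕ) :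
    loglik R μ x = ∑ p : Fin m × Fin NW,
      ((∑ i with R i = p.1, (x (i, p.2) : ℝ)) * Real.log (μ p) - #{i | R i = p.1} * μ p) := by
  rw [loglik, Fintype.sum_prod_type_right]
  refine sum_congr rfl fun w _ => ?_
  rw [← sum_fiberwise univ R fun i => (x (i, w) : ℝ) * Real.log (μ (R i, w)) - μ (R i, w)]
  refine sum_congr rfl fun h _ => ?_
  rw [sum_mul, card_eq_sum_ones, Nat.cast_sum, sum_mul, ← sum_sub_distrib]
  refine sum_congr rfl fun i hi => ?_
  rw [(mem_filter.1 hi).2]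
  simp

lemma sum_loglik_eq_sum_regions {ι : Type*} {NI NW m : ℕ} (s : Finset ι) (R : Fin NI → Fin m)
    (μ : Fin m × Fin NW → ℝ) (x : ι → Fin NI × Fin NW → ℕ) :
    ∑ t ∈ s, loglik R μ (x t) = ∑ p : Fin m × Fin NW,
      ((∑ t ∈ s, ∑ i with R i = p.1, (x t (i, p.2) : ℝ)) * Real.log (μ p)
        - (#s * #{i | R i = p.1}) * μ p) := by
  simp_rw [loglik_eq_sum_regions]
  rw [sum_comm]
  refine sum_congr rfl fun p _ => ?_
  rw [sum_sub_distrib, ← sum_mul, ← sum_mul, sum_const, nsmul_eq_mul, mul_assoc]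

theorem norm_sub_le_of_forall_abs_average_sub_le {ι : Type*} {NI NW m : ℕ}
    {R : Fin NI → Fin m} (hR : Function.Surjective R) {Cd Cu ε : ℝ} (hCd : 0 < Cd) (hε : 0 ≤ ε)
    {s : Finset ι} (hs : s.Nonempty) {x : ι → Fin NI × Fin NW → ℕ}
    {μ μ0 : Fin m × Fin NW → ℝ} (hμ0 : μ0 ∈ Theta Cd Cu m NW) (hμ : μ ∈ Theta Cd Cu m NW)
    (hmax : IsMaxOn (fun ν => ∑ t ∈ s, loglik R ν (x t)) (Theta Cd Cu m NW) μ)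
    (havg : ∀ i w, |(∑ t ∈ s, (x t (i, w) : ℝ)) / #s - μ0 (R i, w)| ≤ ε) :
    ‖μ - μ0‖ ≤ ε := by
  rw [pi_norm_le_iff_of_nonneg hε]
  rintro ⟨h, w⟩
  set S := ∑ t ∈ s, ∑ i with R i = h, (x t (i, w) : ℝ)
  set K : ℝ := #s * #{i | R i = h}
  have hregion : ({i | R i = h} : Finset (Fin NI)).Nonempty :=
    let ⟨i, hi⟩ := hR h; ⟨i, by simpa using hi⟩
  have hK : 0 < K := by have := hs.card_pos; have := hregion.card_pos; positivity
  have hcoord : IsMaxOn (fun c => S * Real.log c - K * c) (Set.Icc Cd Cu) (μ (h, w)) := by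
    intro c hc
    have hupd : Function.update μ (h, w) c ∈ Theta Cd Cu m NW := fun p => by
      rw [Function.update_apply]; split_ifs; exacts [hc, hμ p]
    have hle := le_of_sum_update_le
      (fun p c => (∑ t ∈ s, ∑ i with R i = p.1, (x t (i, p.2) : ℝ)) * Real.log c
        - (#s * #{i | R i = p.1} : ℝ) * c) μ (h, w) c
      (by simpa only [Set.mem_ofPred_eq, sum_loglik_eq_sum_regions] using hmax hupd)
    exact hle
  have hclose : |S / K - μ0 (h, w)| ≤ ε := by
    have hS : S / K = (∑ i with R i = h, (∑ t ∈ s, (x t (i, w) : ℝ)) / #s)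
        / #{i | R i = h} := by
      rw [← sum_div, div_div, sum_comm]
    rw [hS]
    refine abs_average_sub_le hregion fun i hi => ?_
    simpa [(mem_filter.1 hi).2] using havg i w
  rw [Pi.sub_apply, Real.norm_eq_abs,
    eq_max_min_of_isMaxOn (by positivity) hK hCd (hμ (h, w)) hcoord,
    ← max_eq_right (hμ0 (h, w)).1, ← min_eq_right (hμ0 (h, w)).2]
  exact (Set.abs_projIcc_sub_projIcc ((hμ0 (h, w)).1.trans (hμ0 (h, w)).2)).trans hclose

lemma Finset.sum_Ioc_eq_sum_range_sub {M : Type*} [AddCommGroup M] (f : ℕ → M) {a b : ℕ}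
    (hab : a ≤ b) :
    ∑ t ∈ Ioc a b, f t = ∑ t ∈ range b, f (t + 1) - ∑ t ∈ range a, f (t + 1) := by
  rw [← Ico_add_one_add_one_eq_Ioc, sum_Ico_eq_sub _ (by omega), sum_range_succ', sum_range_succ']
  abel

lemma tendsto_iSup_nhds_zero_of_forall_eventually_le {α ι : Type*} {l : Filter α}
    {f : α → ι → ℝ} (hf : ∀ n i, 0 ≤ f n i) (h : ∀ ε > 0, ∀ᶠ n in l, ∀ i, f n i ≤ ε) :
    Tendsto (fun n => ⨆ i, f n i) l (𝓝 0) :=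
  tendsto_order.2 ⟨fun _ ha => Eventually.of_forall fun n => ha.trans_le (Real.iSup_nonneg (hf n)),
    fun _ ha => (h _ (half_pos ha)).mono fun _ hn =>
      (Real.iSup_le hn (half_pos ha).le).trans_lt (half_lt_self ha)⟩

namespace AdmPair

variable {epsnu : ℝ} (q : AdmPair epsnu) (n : ℕ)

lemma floor_mul_snd_le : ⌊(n : ℝ) * q.1.2⌋₊ ≤ n :=
  Nat.floor_le_of_le (mul_le_of_le_one_right n.cast_nonneg q.2.2.2.1)

lemma le_floor_mul_snd_sub_floor_mul_fst (hn : 2 ≤ n * epsnu) :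
    epsnu / 2 * n ≤ (⌊(n : ℝ) * q.1.2⌋₊ : ℝ) - ⌊(n : ℝ) * q.1.1⌋₊ := by
  obtain ⟨h0, -, -, hgap⟩ := q.2
  have hlt := Nat.lt_floor_add_one ((n : ℝ) * q.1.2)
  have hle := Nat.floor_le (mul_nonneg n.cast_nonneg h0)
  nlinarith [mul_le_mul_of_nonneg_left hgap.le n.cast_nonneg]

lemma floor_mul_fst_lt_floor_mul_snd (hn : 2 ≤ n * epsnu) :
    ⌊(n : ℝ) * q.1.1⌋₊ < ⌊(n : ℝ) * q.1.2⌋₊ := by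
  have : (⌊(n : ℝ) * q.1.1⌋₊ : ℝ) < ⌊(n : ℝ) * q.1.2⌋₊ := by
    linarith [q.le_floor_mul_snd_sub_floor_mul_fst n hn]
  exact_mod_cast this

end AdmPair

theorem lemma2_prop_6_2_general
    {NI NW m0 : ℕ}
    (Cd Cu : ℝ) (hCd : 0 < Cd)
    (epsnu : ℝ) (hepsnu : 0 < epsnu ∧ epsnu < 1)
    (R0 : Fin NI → Fin m0) (hR0surj : ∀ h, ∃ i, R0 i = h)
    (μ0 : Fin m0 × Fin NW → ℝ)
    -- Assumption 1
    (hA1 : ∀ p, μ0 p ∈ Set.Icc Cd Cu)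
    {Ω : Type*} [MeasurableSpace Ω] (Pr : Measure Ω)
    (X : ℕ → Ω → Fin NI × Fin NW → ℕ)
    (hmeas : ∀ t p, Measurable fun ω => X t ω p)
    (hindep : iIndepFun (fun (q : ℕ × (Fin NI × Fin NW)) ω => X q.1 ω q.2) Pr)
    (hlaw : ∀ t p, Measure.map (fun ω => X t ω p) Pr
      = poissonMeasure (μ0 (R0 p.1, p.2)).toNNReal)
    -- the (random) maximizer of the partial-sum log-likelihood over Θ(R°)
    (μhat : ℕ → AdmPair epsnu → Ω → (Fin m0 × Fin NW → ℝ))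
    (hμhat_mem : ∀ n q ω, μhat n q ω ∈ Theta Cd Cu m0 NW)
    (hμhat_max : ∀ (n : ℕ) (q : AdmPair epsnu) (ω : Ω),
      ∀ μ ∈ Theta Cd Cu m0 NW,
        ∑ t ∈ Finset.Ioc ⌊(n : ℝ) * q.1.1⌋₊ ⌊(n : ℝ) * q.1.2⌋₊, loglik R0 μ (X t ω)
          ≤ ∑ t ∈ Finset.Ioc ⌊(n : ℝ) * q.1.1⌋₊ ⌊(n : ℝ) * q.1.2⌋₊,
              loglik R0 (μhat n q ω) (X t ω)) :
    ∀ᵐ ω ∂Pr,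
      Tendsto (fun n : ℕ => ⨆ q : AdmPair epsnu, ‖μhat n q ω - μ0‖)
        atTop (𝓝 0) := by
  have hslln : ∀ᵐ ω ∂Pr, ∀ p : Fin NI × Fin NW, Tendsto
      (fun n : ℕ => (∑ t ∈ range n, (X (t + 1) ω p : ℝ)) / n) atTop (𝓝 (μ0 (R0 p.1, p.2))) := by
    refine ae_all_iff.2 fun p => ?_
    have h := ae_tendsto_average_of_map_eq_poissonMeasure (fun t ω => X (t + 1) ω p)
      (fun t => hmeas _ p) (fun s t hst => hindep.indepFun (i := (s + 1, p)) (j := (t + 1, p))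
        (by simpa using hst)) (fun t => hlaw _ p)
    rwa [Real.coe_toNNReal _ (hCd.trans_le (hA1 _).1).le] at h
  filter_upwards [hslln] with ω hω
  refine tendsto_iSup_nhds_zero_of_forall_eventually_le (fun _ _ => norm_nonneg _) fun ε hε => ?_
  have hlong : ∀ᶠ n : ℕ in atTop, 2 ≤ n * epsnu :=
    (tendsto_natCast_atTop_atTop.atTop_mul_const hepsnu.1).eventually_ge_atTop 2
  filter_upwards [eventually_all.2 fun p => eventually_abs_window_average_sub_le (hω p) hε
    (half_pos hepsnu.1), hlong] with n hwindow hn q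
  have hab := q.floor_mul_fst_lt_floor_mul_snd n hn
  refine norm_sub_le_of_forall_abs_average_sub_le hR0surj hCd hε.le (nonempty_Ioc.2 hab)
    hA1 (hμhat_mem n q ω) (hμhat_max n q ω) fun i w => ?_
  rw [sum_Ioc_eq_sum_range_sub _ hab.le, Nat.card_Ioc, Nat.cast_sub hab.le]
  exact hwindow (i, w) _ _ (q.floor_mul_snd_le n) (q.le_floor_mul_snd_sub_floor_mul_fst n hn)

/-- Lemma 2, part (prop_6.2): when the true segmentation `R°` is used for
estimation, the maximizer `μ̂_n(ν_d,ν_u)` of the partial-sum log-likelihood over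
`Θ(R°)` converges almost surely to the true rates `μ°`, uniformly over all
admissible pairs `(ν_d, ν_u)`. -/
theorem lemma2_prop_6_2
    {NI NW m0 : ℕ} (G : SimpleGraph (Fin NI))
    (Cd Cu : ℝ) (hCd : 0 < Cd) (hCdCu : Cd ≤ Cu)
    (epsnu : ℝ) (hepsnu : 0 < epsnu ∧ epsnu < 1)
    (R0 : Fin NI → Fin m0) (hR0surj : ∀ h, ∃ i, R0 i = h)
    (μ0 : Fin m0 × Fin NW → ℝ)
    -- Assumption 1
    (hA1 : ∀ p, μ0 p ∈ Set.Icc Cd Cu)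
    -- Assumption 2
    (hA2 : ∀ p q, p ≠ q → Neighbouring G R0 p q → ∀ w, μ0 (p, w) ≠ μ0 (q, w))
    {Ω : Type*} [MeasurableSpace Ω] (Pr : Measure Ω) [IsProbabilityMeasure Pr]
    (X : ℕ → Ω → Fin NI × Fin NW → ℕ)
    (hmeas : ∀ t p, Measurable fun ω => X t ω p)
    (hindep : iIndepFun (fun (q : ℕ × (Fin NI × Fin NW)) ω => X q.1 ω q.2) Pr)
    (hlaw : ∀ t p, Measure.map (fun ω => X t ω p) Pr
      = poissonMeasure (μ0 (R0 p.1, p.2)).toNNReal)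
    -- the (random) maximizer of the partial-sum log-likelihood over Θ(R°)
    (μhat : ℕ → AdmPair epsnu → Ω → (Fin m0 × Fin NW → ℝ))
    (hμhat_mem : ∀ n q ω, μhat n q ω ∈ Theta Cd Cu m0 NW)
    (hμhat_max : ∀ (n : ℕ) (q : AdmPair epsnu) (ω : Ω),
      ∀ μ ∈ Theta Cd Cu m0 NW,
        ∑ t ∈ Finset.Ioc ⌊(n : ℝ) * q.1.1⌋₊ ⌊(n : ℝ) * q.1.2⌋₊, loglik R0 μ (X t ω)
          ≤ ∑ t ∈ Finset.Ioc ⌊(n : ℝ) * q.1.1⌋₊ ⌊(n : ℝ) * q.1.2⌋₊,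
              loglik R0 (μhat n q ω) (X t ω)) :
    ∀ᵐ ω ∂Pr,
      Tendsto (fun n : ℕ => ⨆ q : AdmPair epsnu, ‖μhat n q ω - μ0‖)
        atTop (𝓝 0) :=
  lemma2_prop_6_2_general Cd Cu hCd epsnu hepsnu R0 hR0surj μ0 hA1 Pr X hmeas hindep hlaw μhat
    hμhat_mem hμhat_max
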